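/- arXiv:quant-ph/0608195 — 6 statements merged into one kernel-verified Lean document; each statement's English description precedes it below -/
import Mathlib

section
/- Let ρ be a density matrix on a Hilbert space H_A ⊗ H_{A'} ⊗ H_B ⊗ H_{B'} ⊗ H_E (all factors finite-dimensional), and let U = ∑_{i,j} |ij⟩⟨ij|_{AB} ⊗ U_{ij,A'B'} be a twisting operator (controlled unitary on A'B' controlled by the computational basis of AB). Set σ = (U ⊗ I_E) ρ (U† ⊗ I_E). Then for every computational-basis outcome (i,j), the unnormalized post-measurement operators on E coincide: Tr_{A'B'}[(⟨ij|_{AB} ⊗ I_{A'B'E}) σ (|ij⟩_{AB} ⊗ I_{A'B'E})] = Tr_{A'B'}[(⟨ij|_{AB} ⊗ I_{A'B'E}) ρ (|ij⟩_{AB} ⊗ I_{A'B'E})]. In particular, measuring A and B in the computational basis yields the same joint state of the classical outcomes and Eve's system E for ρ and for σ. -/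
open scoped ComplexOrder Matrix

namespace QKD

def IsDensityMatrix {I : Type*} [Fintype I] [DecidableEq I] (ρ : Matrix I I ℂ) : Prop :=
  ρ.PosSemidef ∧ ρ.trace = 1

/-- **Twisting does not change the ccq state of the computational-basis measurement.**
Let `ρ` be a density matrix on `H_A ⊗ H_B ⊗ H_{A'B'} ⊗ H_E` (we group `A'B'` into one
factor `P`), let `U = ∑_{ij} |ij⟩⟨ij|_{AB} ⊗ U_{ij,A'B'}` be a twisting operator
(a controlled unitary on `A'B'` controlled by the computational basis of `AB`),
and let `σ = (U ⊗ I_E) ρ (U† ⊗ I_E)`.  Then for every computational-basis outcome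
`(i,j)` of `AB`, the unnormalized post-measurement operators on `E` coincide:
`Tr_{A'B'}[(⟨ij| ⊗ I) σ (|ij⟩ ⊗ I)] = Tr_{A'B'}[(⟨ij| ⊗ I) ρ (|ij⟩ ⊗ I)]`.
In particular, measuring `A` and `B` in the computational basis yields the same
joint state of the classical outcomes and Eve's system `E` for `ρ` and for `σ`. -/
theorem twisting_preserves_ccq_state
    {A B P E : Type*} [Fintype A] [Fintype B] [Fintype P] [Fintype E]
    [DecidableEq A] [DecidableEq B] [DecidableEq P] [DecidableEq E]
    (ρ : Matrix (((A × B) × P) × E) (((A × B) × P) × E) ℂ)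
    (hρ : IsDensityMatrix ρ)
    (u : A × B → Matrix P P ℂ)
    (hu : ∀ ij, u ij ∈ Matrix.unitaryGroup P ℂ)
    (Ufull : Matrix (((A × B) × P) × E) (((A × B) × P) × E) ℂ)
    (hU : ∀ x y, Ufull x y =
      (if x.1.1 = y.1.1 then u x.1.1 x.1.2 y.1.2 else 0) * (if x.2 = y.2 then 1 else 0))
    (σ : Matrix (((A × B) × P) × E) (((A × B) × P) × E) ℂ)
    (hσ : σ = Ufull * ρ * Ufullᴴ) :
    ∀ ij : A × B, ∀ e e' : E,
      (∑ x : P, σ (((ij, x), e)) (((ij, x), e'))) =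
      (∑ x : P, ρ (((ij, x), e)) (((ij, x), e'))) := by
  intro ij e e'
  obtain ⟨i, j⟩ := ij
  set ij : A × B := (i, j) with hij
  have hu' : ∀ y y' : P, (∑ x : P, (starRingEnd ℂ) (u ij x y') * u ij x y) =
      if y' = y then (1:ℂ) else 0 := by
    intro y y'
    have h : star (u ij) * u ij = 1 := (hu ij).1
    have h2 := congrFun (congrFun h y') y
    simpa [Matrix.mul_apply, Matrix.conjTranspose_apply, Matrix.one_apply] using h2
  subst hσ
  simp only [Matrix.mul_apply, Matrix.conjTranspose_apply, hU]
  simp only [Fintype.sum_prod_type, mul_ite, mul_one, mul_zero, ite_mul, zero_mul,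
    map_mul, apply_ite (starRingEnd ℂ), map_one, map_zero, Finset.sum_ite_eq, Finset.sum_ite_eq',
    Finset.mem_univ, if_true, Finset.sum_ite_irrel, Finset.sum_const_zero]
  simp only [apply_ite star, star_zero, mul_ite, mul_zero, hij, Prod.mk.injEq, ite_and,
    Finset.sum_ite_eq, Finset.sum_ite_eq', Finset.mem_univ, if_true,
    Finset.sum_const_zero, ite_mul, zero_mul, Finset.sum_ite_irrel]
  calc ∑ x : P, ∑ x_2 : P, (∑ x_4 : P, u ij x x_4 * ρ ((ij, x_4), e) ((ij, x_2), e')) * star (u ij x x_2)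
      = ∑ x_2 : P, ∑ x_4 : P, (∑ x : P, star (u ij x x_2) * u ij x x_4) * ρ ((ij, x_4), e) ((ij, x_2), e') := by
        rw [Finset.sum_comm]
        refine Finset.sum_congr rfl fun x2 _ => ?_
        simp only [Finset.sum_mul, Finset.mul_sum]
        rw [Finset.sum_comm]
        exact Finset.sum_congr rfl fun x4 _ => Finset.sum_congr rfl fun x _ => by ring
    _ = ∑ x : P, ρ ((ij, x), e) ((ij, x), e') := by
        simp [hu', ite_mul, zero_mul, one_mul]

end QKD
end

section
/- Let H be a finite-dimensional complex Hilbert space, |θ⟩ ∈ H a unit vector, and 0 ≤ r ≤ n − m. If ρ_n ∈ conv(|θ⟩^{[⊗,n,r]}), then the reduced density matrix ρ_{n−m} obtained by tracing out any m of the n tensor factors satisfies ρ_{n−m} ∈ conv(|θ⟩^{[⊗,n−m,r]}). -/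
open scoped ComplexOrder Matrix

namespace QKD

def outer {I : Type*} (v : I → ℂ) : Matrix I I ℂ := fun a b => v a * star (v b)

noncomputable def vecNorm2 {I : Type*} [Fintype I] (v : I → ℂ) : ℝ := ∑ a, Complex.normSq (v a)

def SymVec (ι α : Type*) : Set ((ι → α) → ℂ) :=
  {v | ∀ π : Equiv.Perm ι, ∀ f, v (f ∘ π) = v f}

/-- span of the permuted vectors `θ^{⊗(n−r)} ⊗ ψ_r`: a spanning vector is determined by
a set `T` of `r` positions carrying an arbitrary tensor `ψ`, with `θ` on the rest -/
noncomputable def apSpan {ι α : Type*} [Fintype ι] [DecidableEq ι] (θ : α → ℂ) (r : ℕ) :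
    Submodule ℂ ((ι → α) → ℂ) :=
  Submodule.span ℂ {v | ∃ T : Finset ι, T.card = r ∧
    ∃ ψ : ({x // x ∈ T} → α) → ℂ, ∀ f, v f = (∏ i ∈ Tᶜ, θ (f i)) * ψ (fun x => f x.1)}

/-- almost power states along `θ`: unit vectors in `Sym(H^{⊗ι}) ∩ apSpan θ r` -/
def apStates {ι α : Type*} [Fintype ι] [DecidableEq ι] [Fintype α] (θ : α → ℂ) (r : ℕ) :
    Set ((ι → α) → ℂ) :=
  {v | vecNorm2 v = 1 ∧ v ∈ SymVec ι α ∧ v ∈ apSpan θ r}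

/-- convex mixtures of outer products of vectors from `S` -/
def mixtures {I : Type*} (S : Set (I → ℂ)) : Set (Matrix I I ℂ) :=
  {ρ | ∃ (K : ℕ) (p : Fin K → ℝ) (Ψ : Fin K → (I → ℂ)),
    (∀ i, 0 ≤ p i) ∧ (∑ i, p i) = 1 ∧ (∀ i, Ψ i ∈ S) ∧ ρ = ∑ i, p i • outer (Ψ i)}

/-- partial trace over the last `m` of `k + m` factors -/
noncomputable def ptraceRight {α : Type*} [Fintype α] (k m : ℕ)
    (ρ : Matrix (Fin (k + m) → α) (Fin (k + m) → α) ℂ) : Matrix (Fin k → α) (Fin k → α) ℂ :=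
  fun f g => ∑ h : Fin m → α, ρ (Fin.append f h) (Fin.append g h)

/-! ### Auxiliary lemmas -/

section Aux

set_option linter.unusedSectionVars false

variable {I : Type*} [Fintype I]

lemma vecNorm2_nonneg (v : I → ℂ) : 0 ≤ vecNorm2 v :=
  Finset.sum_nonneg fun _ _ => Complex.normSq_nonneg _

lemma vecNorm2_eq_zero {v : I → ℂ} (h : vecNorm2 v = 0) : v = 0 := by
  funext a
  have := (Finset.sum_eq_zero_iff_of_nonneg
    (fun i _ => Complex.normSq_nonneg (v i))).1 h a (Finset.mem_univ a)
  simpa using Complex.normSq_eq_zero.1 this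

lemma vecNorm2_real_smul (c : ℝ) (v : I → ℂ) : vecNorm2 (c • v) = c ^ 2 * vecNorm2 v := by
  unfold vecNorm2
  rw [Finset.mul_sum]
  refine Finset.sum_congr rfl fun a _ => ?_
  simp [Complex.real_smul, map_mul, Complex.normSq_ofReal, sq]

lemma outer_real_smul (c : ℝ) (v : I → ℂ) : outer (c • v) = (c ^ 2 : ℝ) • outer v := by
  funext a b
  simp only [outer, Pi.smul_apply, Complex.real_smul, Matrix.smul_apply, star_mul']
  rw [Complex.ofReal_pow]
  simp [Complex.conj_ofReal]
  ring

lemma outer_zero : outer (0 : I → ℂ) = 0 := by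
  funext a b; simp [outer]

variable {α : Type*} [Fintype α] [DecidableEq α]

/-- append as an equivalence -/
noncomputable def appendEquiv (k m : ℕ) (α : Type*) :
    ((Fin k → α) × (Fin m → α)) ≃ (Fin (k + m) → α) :=
  (Equiv.sumArrowEquivProdArrow _ _ _).symm.trans
    (Equiv.arrowCongr finSumFinEquiv (Equiv.refl α))

lemma appendEquiv_apply {k m : ℕ} (f : Fin k → α) (h : Fin m → α) :
    appendEquiv k m α (f, h) = Fin.append f h := by
  funext x
  simp only [appendEquiv, Equiv.trans_apply, Equiv.arrowCongr_apply, Equiv.coe_refl,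
    Function.comp_apply, id_eq]
  refine Fin.addCases (fun i => ?_) (fun j => ?_) x
  · simp [Equiv.sumArrowEquivProdArrow, Fin.append_left]
  · simp [Equiv.sumArrowEquivProdArrow, Fin.append_right]

lemma append_comp_extPerm {k m : ℕ} (σ : Equiv.Perm (Fin k)) (f : Fin k → α) (h : Fin m → α) :
    Fin.append (f ∘ σ) h =
      (Fin.append f h) ∘ (finSumFinEquiv.symm.trans
        ((σ.sumCongr (Equiv.refl (Fin m))).trans finSumFinEquiv)) := by
  funext x
  refine Fin.addCases (fun i => ?_) (fun j => ?_) x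
  · simp [Fin.append_left]
  · simp [Fin.append_right]

lemma sum_restrict_norm {k m : ℕ} (Ψ : (Fin (k + m) → α) → ℂ) :
    ∑ h : Fin m → α, vecNorm2 (fun f => Ψ (Fin.append f h)) = vecNorm2 Ψ := by
  unfold vecNorm2
  rw [← Equiv.sum_comp (appendEquiv k m α) (fun g => Complex.normSq (Ψ g)),
    Fintype.sum_prod_type, Finset.sum_comm]
  refine Finset.sum_congr rfl fun h _ => Finset.sum_congr rfl fun f _ => ?_
  rw [appendEquiv_apply]

lemma restrict_symm {k m : ℕ} {Ψ : (Fin (k + m) → α) → ℂ}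
    (hΨ : Ψ ∈ SymVec (Fin (k + m)) α) (h : Fin m → α) :
    (fun f => Ψ (Fin.append f h)) ∈ SymVec (Fin k) α := by
  intro σ f
  show Ψ (Fin.append (f ∘ σ) h) = Ψ (Fin.append f h)
  rw [append_comp_extPerm σ f h]
  exact hΨ _ (Fin.append f h)

noncomputable def powVec (k : ℕ) (θ : α → ℂ) : (Fin k → α) → ℂ := fun f => ∏ i, θ (f i)

lemma powVec_mem_apStates {k r : ℕ} (hr : r ≤ k) (θ : α → ℂ) (hθ : vecNorm2 θ = 1) :
    powVec k θ ∈ apStates (ι := Fin k) θ r := by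
  refine ⟨?_, ?_, ?_⟩
  · unfold vecNorm2 powVec
    have : ∀ f : Fin k → α, Complex.normSq (∏ i, θ (f i)) = ∏ i, Complex.normSq (θ (f i)) :=
      fun f => map_prod Complex.normSq _ _
    calc ∑ f : Fin k → α, Complex.normSq (∏ i, θ (f i))
        = ∑ f : Fin k → α, ∏ i, Complex.normSq (θ (f i)) := by simp [this]
      _ = ∏ i : Fin k, ∑ a : α, Complex.normSq (θ a) := by
          rw [Finset.prod_univ_sum, Fintype.piFinset_univ]
      _ = 1 := by
          rw [show ∑ a : α, Complex.normSq (θ a) = 1 from hθ]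
          simp
  · intro σ f
    exact Equiv.prod_comp σ (fun i => θ (f i))
  · obtain ⟨T, -, hTcard⟩ := Finset.exists_superset_card_eq (s := (∅ : Finset (Fin k)))
      (by simp) (by simpa using hr)
    apply Submodule.subset_span
    refine ⟨T, hTcard, fun g => ∏ x, θ (g x), fun f => ?_⟩
    show ∏ i : Fin k, θ (f i) = (∏ i ∈ Tᶜ, θ (f i)) * ∏ x : {x // x ∈ T}, θ (f x.1)
    rw [Finset.univ_eq_attach, Finset.prod_attach T (fun i => θ (f i))]
    rw [mul_comm, Finset.prod_mul_prod_compl]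

lemma restrict_apSpan {k m r : ℕ} (hr : r ≤ k) (θ : α → ℂ)
    {Ψ : (Fin (k + m) → α) → ℂ} (hΨ : Ψ ∈ apSpan (ι := Fin (k + m)) θ r) (h : Fin m → α) :
    (fun f => Ψ (Fin.append f h)) ∈ apSpan (ι := Fin k) θ r := by
  induction hΨ using Submodule.span_induction with
  | mem v hv =>
    obtain ⟨T, hTcard, ψ, hv⟩ := hv
    set T₁ : Finset (Fin k) := Finset.univ.filter (fun i => Fin.castAdd m i ∈ T) with hT₁def
    have hT₁mem : ∀ {i : Fin k}, Fin.castAdd m i ∈ T → i ∈ T₁ := fun {i} hi =>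
      Finset.mem_filter.mpr ⟨Finset.mem_univ i, hi⟩
    have hT₁card : T₁.card ≤ r := by
      rw [← hTcard]
      refine Finset.card_le_card_of_injOn (Fin.castAdd m) (fun a ha => ?_)
        (fun a _ b _ hab => ?_)
      · exact (Finset.mem_filter.mp ha).2
      · exact Fin.ext (by simpa using congrArg Fin.val hab)
    obtain ⟨T', hsub, hT'card⟩ := Finset.exists_superset_card_eq hT₁card (by simpa using hr)
    apply Submodule.subset_span
    refine ⟨T', hT'card, fun g =>
      (∏ x ∈ (T' \ T₁).attach, θ (g ⟨x.1, (Finset.mem_sdiff.1 x.2).1⟩)) *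
      ((∏ j ∈ (Finset.univ.filter fun j : Fin m => Fin.natAdd k j ∈ T)ᶜ, θ (h j)) *
        ψ (fun t => Fin.addCases (motive := fun x => x ∈ T → α)
            (fun i hi => g ⟨i, hsub (hT₁mem hi)⟩) (fun j _ => h j) t.1 t.2)),
      fun f => ?_⟩
    show v (Fin.append f h) = (∏ i ∈ T'ᶜ, θ (f i)) *
      ((∏ x ∈ (T' \ T₁).attach, θ (f x.1)) *
      ((∏ j ∈ (Finset.univ.filter fun j : Fin m => Fin.natAdd k j ∈ T)ᶜ, θ (h j)) *
        ψ (fun t => Fin.addCases (motive := fun x => x ∈ T → α)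
            (fun i _ => f i) (fun j _ => h j) t.1 t.2)))
    rw [hv]
    have hA : ∏ i ∈ Tᶜ, θ (Fin.append f h i)
        = (∏ i ∈ T₁ᶜ, θ (f i)) *
          ∏ j ∈ (Finset.univ.filter fun j : Fin m => Fin.natAdd k j ∈ T)ᶜ, θ (h j) := by
      have hc : (Tᶜ : Finset (Fin (k + m))) = Finset.univ.filter (fun i => ¬ i ∈ T) := by
        ext i; simp
      have hc1 : (T₁ᶜ : Finset (Fin k))
          = Finset.univ.filter (fun i => ¬ Fin.castAdd m i ∈ T) := by
        ext i; simp [hT₁def]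
      have hc2 : ((Finset.univ.filter fun j : Fin m => Fin.natAdd k j ∈ T)ᶜ : Finset (Fin m))
          = Finset.univ.filter (fun j => ¬ Fin.natAdd k j ∈ T) := by
        ext j; simp
      rw [hc, hc1, hc2, Finset.prod_filter, Finset.prod_filter, Finset.prod_filter,
        Fin.prod_univ_add]
      congr 1
      · exact Finset.prod_congr rfl fun i _ => by rw [Fin.append_left]
      · exact Finset.prod_congr rfl fun j _ => by rw [Fin.append_right]
    have hsplit : (T₁ᶜ : Finset (Fin k)) = T'ᶜ ∪ (T' \ T₁) := by
      ext i
      simp only [Finset.mem_compl, Finset.mem_union, Finset.mem_sdiff]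
      constructor
      · intro hi
        by_cases h' : i ∈ T'
        · exact Or.inr ⟨h', hi⟩
        · exact Or.inl h'
      · rintro (h' | ⟨-, h'⟩) hmem
        · exact h' (hsub hmem)
        · exact h' hmem
    have hdisj : Disjoint (T'ᶜ : Finset (Fin k)) (T' \ T₁) := by
      rw [Finset.disjoint_left]
      intro a ha hmem
      exact (Finset.mem_compl.1 ha) ((Finset.mem_sdiff.1 hmem).1)
    have hB : ∏ i ∈ T₁ᶜ, θ (f i)
        = (∏ i ∈ T'ᶜ, θ (f i)) * ∏ x ∈ (T' \ T₁).attach, θ (f x.1) := by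
      rw [Finset.prod_attach (T' \ T₁) (fun i => θ (f i)), hsplit, Finset.prod_union hdisj]
    have hC : (fun t : {x // x ∈ T} => Fin.append f h t.1)
        = fun t => Fin.addCases (motive := fun x => x ∈ T → α)
            (fun i _ => f i) (fun j _ => h j) t.1 t.2 := by
      funext t
      obtain ⟨x, hx⟩ := t
      revert hx
      refine Fin.addCases (fun i hi => ?_) (fun j hj => ?_) x
      · simp [Fin.append_left]
      · simp [Fin.append_right]
    rw [hA, hB, hC]
    ring
  | zero => exact zero_mem _
  | add v w hv hw ihv ihw => exact add_mem ihv ihw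
  | smul c v hv ih => exact Submodule.smul_mem _ c ih

end Aux

/-- **Partial traces of mixtures of almost power states are mixtures of almost power
states** (Lemma in the appendix): if `ρ ∈ conv(|θ⟩^{[⊗,n,r]})` on `n = k + m` factors
and `r ≤ k = n − m`, then tracing out any `m` of the `n` factors (an arbitrary
permutation `π` followed by tracing the last `m` factors) leaves a state in
`conv(|θ⟩^{[⊗,k,r]})`. -/
theorem reduced_mixture_of_almost_power_states
    {α : Type*} [Fintype α] [DecidableEq α] (k m r : ℕ) (hr : r ≤ k)
    (θ : α → ℂ) (hθ : vecNorm2 θ = 1)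
    (ρ : Matrix (Fin (k + m) → α) (Fin (k + m) → α) ℂ)
    (hρ : ρ ∈ mixtures (apStates (ι := Fin (k + m)) θ r))
    (π : Equiv.Perm (Fin (k + m))) :
    ptraceRight k m (fun f g => ρ (f ∘ π) (g ∘ π)) ∈ mixtures (apStates (ι := Fin k) θ r) := by
  obtain ⟨K, p, Ψ, hp, hpsum, hmem, hρeq⟩ := hρ
  have entry : ∀ f g, ρ f g = ∑ i, (p i : ℂ) * (Ψ i f * star (Ψ i g)) := by
    intro f g
    rw [hρeq]
    simp [outer, Matrix.sum_apply, Complex.real_smul]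
  -- the permutation acts trivially on symmetric states
  have hπ : (fun f g => ρ (f ∘ π) (g ∘ π)) = ρ := by
    funext f g
    rw [entry, entry]
    refine Finset.sum_congr rfl fun i _ => ?_
    rw [(hmem i).2.1 π f, (hmem i).2.1 π g]
  rw [hπ]
  -- set up the decomposition
  set Φ : Fin K → (Fin m → α) → (Fin k → α) → ℂ :=
    fun i h f => Ψ i (Fin.append f h) with hΦdef
  set nn : Fin K → (Fin m → α) → ℝ := fun i h => vecNorm2 (Φ i h) with hnndef
  set q : Fin K × (Fin m → α) → ℝ := fun x => p x.1 * nn x.1 x.2 with hqdef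
  set u : Fin K × (Fin m → α) → (Fin k → α) → ℂ := fun x =>
    if nn x.1 x.2 = 0 then powVec k θ else ((Real.sqrt (nn x.1 x.2))⁻¹ : ℝ) • Φ x.1 x.2
    with hudef
  have hq0 : ∀ x, 0 ≤ q x := fun x => mul_nonneg (hp x.1) (vecNorm2_nonneg _)
  have hqsum : ∑ x : Fin K × (Fin m → α), q x = 1 := by
    rw [Fintype.sum_prod_type]
    calc ∑ i, ∑ h, p i * nn i h = ∑ i, p i * ∑ h, nn i h := by
          simp [Finset.mul_sum]
      _ = ∑ i, p i := by
          refine Finset.sum_congr rfl fun i _ => ?_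
          rw [hnndef]
          simp only
          rw [sum_restrict_norm (Ψ i), (hmem i).1, mul_one]
      _ = 1 := hpsum
  have humem : ∀ x, u x ∈ apStates (ι := Fin k) θ r := by
    intro x
    rw [hudef]
    by_cases hz : nn x.1 x.2 = 0
    · simp only [hz, if_pos rfl]
      exact powVec_mem_apStates hr θ hθ
    · simp only [if_neg hz]
      have hnpos : 0 < nn x.1 x.2 := lt_of_le_of_ne (vecNorm2_nonneg _) (Ne.symm hz)
      refine ⟨?_, ?_, ?_⟩
      · rw [vecNorm2_real_smul]
        rw [inv_pow, Real.sq_sqrt hnpos.le]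
        exact inv_mul_cancel₀ hz
      · intro σ f
        simp only [Pi.smul_apply]
        congr 1
        exact restrict_symm (hmem x.1).2.1 x.2 σ f
      · exact Submodule.smul_of_tower_mem _ _
          (restrict_apSpan hr θ (hmem x.1).2.2 x.2)
  have houter : ∀ x : Fin K × (Fin m → α),
      q x • outer (u x) = p x.1 • outer (Φ x.1 x.2) := by
    intro x
    by_cases hz : nn x.1 x.2 = 0
    · have hΦ0 : Φ x.1 x.2 = 0 := vecNorm2_eq_zero hz
      rw [hqdef]
      simp only [hz, mul_zero, zero_smul, hΦ0, outer_zero, smul_zero]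
    · have hnpos : 0 < nn x.1 x.2 := lt_of_le_of_ne (vecNorm2_nonneg _) (Ne.symm hz)
      rw [hudef]
      simp only [if_neg hz]
      rw [outer_real_smul, hqdef]
      rw [smul_smul]
      congr 1
      rw [inv_pow, Real.sq_sqrt hnpos.le]
      field_simp
  have hdecomp : ptraceRight k m ρ = ∑ x : Fin K × (Fin m → α), q x • outer (u x) := by
    funext f g
    rw [show (∑ x : Fin K × (Fin m → α), q x • outer (u x))
        = ∑ x : Fin K × (Fin m → α), p x.1 • outer (Φ x.1 x.2) from
      Finset.sum_congr rfl fun x _ => houter x]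
    unfold ptraceRight
    simp only [Matrix.sum_apply, Matrix.smul_apply, outer, Fintype.sum_prod_type,
      Complex.real_smul]
    rw [Finset.sum_comm]
    simp only [entry]
    rfl
  -- repackage over Fin N
  set e := Fintype.equivFin (Fin K × (Fin m → α)) with hedef
  refine ⟨Fintype.card (Fin K × (Fin m → α)), fun j => q (e.symm j), fun j => u (e.symm j),
    fun j => hq0 _, ?_, fun j => humem _, ?_⟩
  · rw [Equiv.sum_comp e.symm q]
    exact hqsum
  · rw [hdecomp]
    exact (Equiv.sum_comp e.symm (fun x => q x • outer (u x))).symm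

end QKD
end

section
/- Let H be a finite-dimensional complex Hilbert space with orthonormal computational basis {|i⟩}, |θ⟩ ∈ H a unit vector, 0 ≤ r ≤ n − m, and |Ψ_n⟩ ∈ |θ⟩^{[⊗,n,r]}. Then for any computational basis vectors |i_1⟩, …, |i_m⟩, the vector (⟨i_1| ⊗ ⋯ ⊗ ⟨i_m| ⊗ I^{⊗(n−m)}) |Ψ_n⟩ lies in Sym(H^{⊗(n−m)}) ∩ span{π(|θ⟩^{⊗(n−m−r)} ⊗ |ψ_r⟩) : π a permutation of the n−m tensor factors, |ψ_r⟩ ∈ H^{⊗r}}; in particular, if it is nonzero, its normalization belongs to |θ⟩^{[⊗,n−m,r]}. -/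
open scoped ComplexOrder Matrix

namespace QKD

/-- **Computational-basis slices of almost power states are almost power states.**
Let `|Ψ⟩ ∈ |θ⟩^{[⊗,m+k,r]}` with `r ≤ k` and let `|i₁⟩, …, |i_m⟩` be computational
basis vectors.  Then `v = (⟨i₁| ⊗ ⋯ ⊗ ⟨i_m| ⊗ I^{⊗k}) |Ψ⟩` lies in
`Sym(H^{⊗k}) ∩ span{π(|θ⟩^{⊗(k−r)} ⊗ |ψ_r⟩)}`; in particular if `v ≠ 0` its
normalization belongs to `|θ⟩^{[⊗,k,r]}`. -/
theorem slice_of_almost_power_state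
    {α : Type*} [Fintype α] [DecidableEq α] (m k r : ℕ) (hr : r ≤ k)
    (θ : α → ℂ) (hθ : vecNorm2 θ = 1)
    (Ψ : (Fin (m + k) → α) → ℂ) (hΨ : Ψ ∈ apStates (ι := Fin (m + k)) θ r)
    (i : Fin m → α) :
    (fun g : Fin k → α => Ψ (Fin.append i g)) ∈ SymVec (Fin k) α ∧
    (fun g : Fin k → α => Ψ (Fin.append i g)) ∈ apSpan (ι := Fin k) θ r ∧
    ((fun g : Fin k → α => Ψ (Fin.append i g)) ≠ 0 →
      (Real.sqrt (vecNorm2 fun g : Fin k → α => Ψ (Fin.append i g)))⁻¹ •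
          (fun g : Fin k → α => Ψ (Fin.append i g)) ∈ apStates (ι := Fin k) θ r) := by
  classical
  obtain ⟨hN, hSym, hSpan⟩ := hΨ
  haveI hα : Nonempty α := by
    by_contra h
    rw [not_nonempty_iff] at h
    simp [vecNorm2, Finset.univ_eq_empty] at hθ
  set v : (Fin k → α) → ℂ := fun g => Ψ (Fin.append i g) with hv
  -- symmetry
  have hvSym : v ∈ SymVec (Fin k) α := by
    intro π g
    set π' : Equiv.Perm (Fin (m + k)) :=
      Equiv.permCongr finSumFinEquiv (Equiv.sumCongr (Equiv.refl (Fin m)) π) with hπ'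
    have hcomp : (Fin.append i g) ∘ π' = Fin.append i (g ∘ π) := by
      funext x
      refine Fin.addCases (fun j => ?_) (fun j => ?_) x <;>
        simp [hπ', Equiv.permCongr_apply, finSumFinEquiv_symm_apply_castAdd,
          finSumFinEquiv_symm_apply_natAdd, Fin.append_left, Fin.append_right]
    calc v (g ∘ π) = Ψ ((Fin.append i g) ∘ π') := by rw [hcomp]
      _ = Ψ (Fin.append i g) := hSym π' (Fin.append i g)
  -- span
  have hvSpan : v ∈ apSpan (ι := Fin k) θ r := by
    set L : ((Fin (m + k) → α) → ℂ) →ₗ[ℂ] ((Fin k → α) → ℂ) :=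
      LinearMap.funLeft ℂ ℂ (Fin.append i) with hL
    have hgen : {w : (Fin (m + k) → α) → ℂ | ∃ T : Finset (Fin (m + k)), T.card = r ∧
        ∃ ψ : ({x // x ∈ T} → α) → ℂ, ∀ f, w f = (∏ j ∈ Tᶜ, θ (f j)) * ψ (fun x => f x.1)}
        ⊆ (apSpan (ι := Fin k) θ r).comap L := by
      rintro w ⟨T, hTcard, ψ, hψ⟩
      set T₀ : Finset (Fin k) := Finset.univ.filter (fun j => Fin.natAdd m j ∈ T) with hT₀
      have hT₀card : T₀.card ≤ r := by
        rw [← hTcard]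
        apply Finset.card_le_card_of_injOn (fun j => Fin.natAdd m j)
        · intro j hj
          simpa [hT₀] using hj
        · intro a _ b _ hab
          have := congrArg Fin.val hab
          simp [Fin.natAdd] at this
          exact Fin.ext this
      obtain ⟨T', hT₀T', -, hT'card⟩ :=
        Finset.exists_subsuperset_card_eq (T₀.subset_univ) hT₀card
          (by simpa using hr)
      set C : ℂ := ∏ j ∈ Finset.univ.filter (fun j : Fin m => Fin.castAdd k j ∉ T), θ (i j)
        with hC
      set G : ({x // x ∈ T'} → α) → (Fin k → α) :=
        fun h j => if hj : j ∈ T' then h ⟨j, hj⟩ else Classical.arbitrary α with hG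
      refine Submodule.subset_span ⟨T', hT'card,
        fun h => C * (∏ j ∈ T' \ T₀, θ (G h j)) * ψ (fun x => Fin.append i (G h) x.1), ?_⟩
      intro g
      set h : {x // x ∈ T'} → α := fun x => g x.1 with hh
      have hGh : ∀ j ∈ T', G h j = g j := by
        intro j hj
        simp [hG, dif_pos hj, hh]
      -- L w g = w (append i g)
      have hLw : L w g = w (Fin.append i g) := rfl
      have hkey : (fun x : {x // x ∈ T} => Fin.append i (G h) x.1)
          = (fun x : {x // x ∈ T} => Fin.append i g x.1) := by
        funext x
        obtain ⟨x, hx⟩ := x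
        revert hx
        refine Fin.addCases (fun j => ?_) (fun j => ?_) x <;> intro hx
        · simp [Fin.append_left]
        · have hjT₀ : j ∈ T₀ := by simp [hT₀, hx]
          simp [Fin.append_right, hGh j (hT₀T' hjT₀)]
      have hsplit : (∏ j ∈ Tᶜ, θ (Fin.append i g j)) = C * ∏ j ∈ T₀ᶜ, θ (g j) := by
        have h1 : Tᶜ = Finset.univ.filter (fun j => j ∉ T) := by
          ext j; simp
        have h2 : T₀ᶜ = Finset.univ.filter (fun j : Fin k => Fin.natAdd m j ∉ T) := by
          ext j; simp [hT₀]
        rw [h1, h2, hC, Finset.prod_filter, Finset.prod_filter, Finset.prod_filter,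
          Fin.prod_univ_add]
        congr 1
        · refine Finset.prod_congr rfl fun j _ => ?_
          simp [Fin.append_left]
        · refine Finset.prod_congr rfl fun j _ => ?_
          simp [Fin.append_right]
      have hrecomb : (∏ j ∈ T₀ᶜ, θ (g j))
          = (∏ j ∈ T'ᶜ, θ (g j)) * ∏ j ∈ T' \ T₀, θ (g j) := by
        rw [← Finset.prod_union]
        · congr 1
          ext j
          by_cases hj' : j ∈ T'
          · by_cases hj0 : j ∈ T₀ <;> simp [hj', hj0]
          · have : j ∉ T₀ := fun hjj => hj' (hT₀T' hjj)
            simp [hj', this]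
        · rw [Finset.disjoint_left]
          intro a ha hb
          exact (Finset.mem_compl.mp ha) (Finset.mem_sdiff.mp hb).1
      have hGprod : (∏ j ∈ T' \ T₀, θ (G h j)) = ∏ j ∈ T' \ T₀, θ (g j) :=
        Finset.prod_congr rfl fun j hj => by rw [hGh j (Finset.mem_sdiff.mp hj).1]
      rw [hLw, hψ (Fin.append i g), hkey.symm, hsplit, hrecomb]
      beta_reduce
      rw [hGprod]
      ring
    have := Submodule.span_le.mpr hgen hSpan
    exact this
  refine ⟨hvSym, hvSpan, fun hne => ?_⟩
  have hpos : 0 < vecNorm2 v := by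
    obtain ⟨a, ha⟩ := Function.ne_iff.mp hne
    refine Finset.sum_pos' (fun b _ => Complex.normSq_nonneg _) ⟨a, Finset.mem_univ a, ?_⟩
    exact Complex.normSq_pos.mpr ha
  set c : ℝ := (Real.sqrt (vecNorm2 v))⁻¹ with hc
  refine ⟨?_, ?_, ?_⟩
  · show (∑ a, Complex.normSq ((c • v) a)) = 1
    have : ∀ a, Complex.normSq ((c • v) a) = (c * c) * Complex.normSq (v a) := by
      intro a
      simp only [Pi.smul_apply, Complex.real_smul, Complex.normSq_mul, Complex.normSq_ofReal]
      try ring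
    simp only [this, ← Finset.mul_sum]
    have : c * c = (vecNorm2 v)⁻¹ := by
      rw [hc, ← mul_inv, Real.mul_self_sqrt hpos.le]
    rw [this]
    exact inv_mul_cancel₀ hpos.ne'
  · intro π f
    simp only [Pi.smul_apply]
    rw [hvSym π f]
  · have : c • v = ((c : ℂ)) • v := by
      funext g
      simp [Pi.smul_apply, Complex.real_smul]
    rw [this]
    exact Submodule.smul_mem _ _ hvSpan

end QKD
end

section
/- Every permutationally invariant density matrix admits a symmetric purification: if ρ_n is a density matrix on H^{⊗n} (H finite-dimensional) that is invariant under conjugation by every permutation of the n tensor factors, then there exists a unit vector |Ψ⟩ ∈ Sym((H ⊗ H)^{⊗n}) (symmetric under permutations of the n pair-factors H ⊗ H) such that tracing out the second factor of each pair yields ρ_n. -/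
open scoped ComplexOrder Matrix

namespace QKD

/-- permutation invariance for matrices on `H^{⊗ι}` -/
def PermInvariant {ι α : Type*} (ρ : Matrix (ι → α) (ι → α) ℂ) : Prop :=
  ∀ π : Equiv.Perm ι, ∀ f g, ρ (f ∘ π) (g ∘ π) = ρ f g

/-- partial trace of `|Ψ⟩⟨Ψ|` over the second (tilde) factor of each site -/
noncomputable def tildeTr {ι α β : Type*} [Fintype ι] [DecidableEq ι] [Fintype β]
    (Ψ : (ι → α × β) → ℂ) : Matrix (ι → α) (ι → α) ℂ :=
  fun f g => ∑ h : ι → β, Ψ (fun i => (f i, h i)) * star (Ψ (fun i => (g i, h i)))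

/-- precomposition with a permutation, as an equiv on functions -/
def precompEquiv {ι α : Type*} (π : Equiv.Perm ι) : (ι → α) ≃ (ι → α) where
  toFun f := f ∘ π
  invFun f := f ∘ π.symm
  left_inv f := by ext i; simp
  right_inv f := by ext i; simp

open scoped MatrixOrder in
noncomputable def _root_.Matrix.PosSemidef.sqrt {m : Type*} [Fintype m] [DecidableEq m]
    {A : Matrix m m ℂ} (_hA : A.PosSemidef) : Matrix m m ℂ := CFC.sqrt A

open scoped MatrixOrder in
lemma _root_.Matrix.PosSemidef.posSemidef_sqrt {m : Type*} [Fintype m] [DecidableEq m]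
    {A : Matrix m m ℂ} (hA : A.PosSemidef) : hA.sqrt.PosSemidef :=
  Matrix.nonneg_iff_posSemidef.mp (CFC.sqrt_nonneg A)

open scoped MatrixOrder in
lemma _root_.Matrix.PosSemidef.sqrt_mul_self {m : Type*} [Fintype m] [DecidableEq m]
    {A : Matrix m m ℂ} (hA : A.PosSemidef) : hA.sqrt * hA.sqrt = A :=
  CFC.sqrt_mul_sqrt_self A hA.nonneg

open scoped MatrixOrder in
lemma _root_.Matrix.PosSemidef.eq_of_sq_eq_sq {m : Type*} [Fintype m] [DecidableEq m]
    {A B : Matrix m m ℂ} (hA : A.PosSemidef) (hB : B.PosSemidef) (h : A ^ 2 = B ^ 2) : A = B := by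
  rw [← CFC.sqrt_mul_self A hA.nonneg, ← CFC.sqrt_mul_self B hB.nonneg, ← pow_two, ← pow_two, h]

/-- the PSD square root of a permutation invariant PSD matrix is permutation invariant -/
lemma sqrt_permInvariant {ι α : Type*} [Fintype ι] [DecidableEq ι] [Fintype α] [DecidableEq α]
    {ρ : Matrix (ι → α) (ι → α) ℂ} (hρ : ρ.PosSemidef) (hperm : PermInvariant ρ) :
    PermInvariant hρ.sqrt := by
  intro π f g
  set e := (precompEquiv π : (ι → α) ≃ (ι → α)) with he
  have hsub : (hρ.sqrt.submatrix e e).PosSemidef := hρ.posSemidef_sqrt.submatrix e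
  have hsq : (hρ.sqrt.submatrix e e) ^ 2 = hρ.sqrt ^ 2 := by
    rw [pow_two, pow_two, Matrix.submatrix_mul_equiv, hρ.sqrt_mul_self]
    ext f g
    exact hperm π f g
  have := hsub.eq_of_sq_eq_sq hρ.posSemidef_sqrt hsq
  have := congrFun (congrFun this f) g
  simpa [Matrix.submatrix_apply, he, precompEquiv] using this

/-- **Every permutationally invariant density matrix admits a symmetric purification**
(Lemma 4.2.2 of Renner):  if `ρ` is a permutationally invariant density matrix on
`H^{⊗n}` with `dim H = d`, then there is a unit vector `Ψ ∈ Sym((H ⊗ H)^{⊗n})`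
whose partial trace over the second factor of each pair equals `ρ`. -/
theorem symmetric_purification (d n : ℕ)
    (ρ : Matrix (Fin n → Fin d) (Fin n → Fin d) ℂ)
    (hρ : IsDensityMatrix ρ) (hperm : PermInvariant ρ) :
    ∃ Ψ : (Fin n → Fin d × Fin d) → ℂ,
      vecNorm2 Ψ = 1 ∧ Ψ ∈ SymVec (Fin n) (Fin d × Fin d) ∧ tildeTr Ψ = ρ := by
  obtain ⟨hpsd, htr⟩ := hρ
  set B := hpsd.sqrt with hB
  have hBpsd : B.PosSemidef := hpsd.posSemidef_sqrt
  have hBherm : ∀ f g, star (B f g) = B g f := by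
    intro f g
    have := congrFun (congrFun hBpsd.isHermitian g) f
    simpa [Matrix.conjTranspose_apply] using this
  have hBB : B * B = ρ := hpsd.sqrt_mul_self
  have hBperm : PermInvariant B := sqrt_permInvariant hpsd hperm
  refine ⟨fun F : Fin n → Fin d × Fin d => B (fun i => (F i).1) (fun i => (F i).2), ?_, ?_, ?_⟩
  · -- norm
    have key : (↑(vecNorm2 (fun F : Fin n → Fin d × Fin d => B (fun i => (F i).1) (fun i => (F i).2))) : ℂ) = 1 := by
      rw [vecNorm2]
      push_cast
      have hsum : ∑ F : Fin n → Fin d × Fin d,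
          ((Complex.normSq (B (fun i => (F i).1) (fun i => (F i).2)) : ℂ))
          = ∑ p : (Fin n → Fin d) × (Fin n → Fin d), ((Complex.normSq (B p.1 p.2)) : ℂ) :=
        Fintype.sum_equiv (Equiv.arrowProdEquivProdArrow (Fin n) (fun _ => Fin d) (fun _ => Fin d)) _ _
          (fun F => by simp [Equiv.arrowProdEquivProdArrow])
      rw [hsum, Fintype.sum_prod_type]
      have : ∀ f g : Fin n → Fin d, (Complex.normSq (B f g) : ℂ) = B f g * B g f := by
        intro f g
        rw [← hBherm f g]
        exact (Complex.mul_conj _).symm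
      simp_rw [this]
      have : ∑ f, ∑ g, B f g * B g f = (B * B).trace := by
        simp [Matrix.trace, Matrix.mul_apply, Matrix.diag]
      rw [this, hBB, htr]
    exact_mod_cast key
  · -- symmetry
    intro π F
    have := hBperm π (fun i => (F i).1) (fun i => (F i).2)
    simpa [Function.comp_def] using this
  · -- partial trace
    ext f g
    rw [tildeTr]
    simp only
    have : ∀ h : Fin n → Fin d,
        B (fun i => ((f i, h i) : Fin d × Fin d).1) (fun i => ((f i, h i) : Fin d × Fin d).2)
          * star (B (fun i => ((g i, h i) : Fin d × Fin d).1)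
            (fun i => ((g i, h i) : Fin d × Fin d).2)) = B f h * B h g := by
      intro h
      simp only
      rw [hBherm]
    simp_rw [this]
    rw [← Matrix.mul_apply, hBB]

end QKD
end

section
/- (From probabilities to averages.) Let H be a complex Hilbert space of dimension d and let L be a Hermitian operator on H with a decomposition L = ∑_{i=1}^t s_i L_i, where s_i ∈ ℝ and {L_i}_{i=1}^t is a trace-orthonormal family of Hermitian operators (Tr(L_i L_j†) = δ_{ij}). For each i, let L_i = ∑_l λ_l^{(i)} Π_l^{(i)} be its spectral decomposition. Let ρ be a density matrix on H, let P^{(i)} = {Tr(ρ Π_l^{(i)})}_l be the outcome distribution of measuring L_i on ρ, and let Q^{(i)} = {q_l^{(i)}}_l be an arbitrary probability distribution on the spectrum of L_i for each i. Then | Tr(Lρ) − ∑_{i=1}^t s_i ∑_l λ_l^{(i)} q_l^{(i)} | ≤ √t · ‖L‖_HS · max_i ‖P^{(i)} − Q^{(i)}‖, where ‖L‖_HS = √(Tr(L†L)) is the Hilbert–Schmidt norm. -/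
open scoped ComplexOrder Matrix

namespace QKD

/-- ℓ¹ distance between two distributions on a finite set -/
noncomputable def l1dist {W : Type*} [Fintype W] (P Q : W → ℝ) : ℝ := ∑ w, |P w - Q w|

/-- Hilbert–Schmidt norm `√(Tr(XᴴX))` -/
noncomputable def hsNorm {I : Type*} [Fintype I] (X : Matrix I I ℂ) : ℝ :=
  Real.sqrt ((Xᴴ * X).trace.re)

/-- spectral projector of a Hermitian matrix onto its `k`-th eigenvector -/
noncomputable def eigProj {d : ℕ} {L : Matrix (Fin d) (Fin d) ℂ} (hL : L.IsHermitian)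
    (k : Fin d) : Matrix (Fin d) (Fin d) ℂ :=
  fun a b => (hL.eigenvectorUnitary : Matrix (Fin d) (Fin d) ℂ) a k *
    star ((hL.eigenvectorUnitary : Matrix (Fin d) (Fin d) ℂ) b k)

section aux
variable {d : ℕ} {A : Matrix (Fin d) (Fin d) ℂ} (hA : A.IsHermitian)

lemma spectral_sum : A = ∑ k, ((hA.eigenvalues k : ℂ)) • eigProj hA k := by
  ext a b
  conv_lhs => rw [hA.spectral_theorem]
  simp only [Unitary.conjStarAlgAut_apply, Matrix.mul_apply, Matrix.sum_apply, Matrix.smul_apply, eigProj,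
    Matrix.diagonal_apply, Matrix.star_apply, Function.comp_apply, smul_eq_mul,
    Finset.sum_mul, ite_mul, zero_mul]
  rw [Finset.sum_comm]
  refine Finset.sum_congr rfl fun j _ => ?_
  simp [Finset.sum_ite_eq, Finset.mem_univ]
  ring

lemma trace_sq : (A * A).trace = ∑ k, ((hA.eigenvalues k : ℂ))^2 := by
  conv_lhs => rw [hA.spectral_theorem]
  set U := (hA.eigenvectorUnitary : Matrix (Fin d) (Fin d) ℂ)
  set D := Matrix.diagonal ((RCLike.ofReal ∘ hA.eigenvalues : Fin d → ℂ)) with hD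
  have h1 : star U * U = 1 := Matrix.UnitaryGroup.star_mul_self hA.eigenvectorUnitary
  calc (U * D * star U * (U * D * star U)).trace
      = (U * (D * D) * star U).trace := by
        rw [show U * D * star U * (U * D * star U) = U * D * (star U * U) * D * star U by
          noncomm_ring, h1]; noncomm_ring
    _ = (D * D * (star U * U)).trace := by
        rw [Matrix.trace_mul_cycle]
        rw [h1, one_mul, mul_one]
    _ = ∑ k, ((hA.eigenvalues k : ℂ))^2 := by
        rw [h1, mul_one, hD, Matrix.diagonal_mul_diagonal, Matrix.trace_diagonal]
        simp [sq]

end aux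


/-- **From probabilities to averages** (Lemma in the appendix):
let `L = ∑ᵢ sᵢ Lᵢ` be a Hermitian operator decomposed over a trace-orthonormal family
of Hermitian operators, with spectral decompositions `Lᵢ = ∑ₗ λₗ⁽ⁱ⁾ Πₗ⁽ⁱ⁾`.  Let `ρ` be
a density matrix, `P⁽ⁱ⁾ = {Tr(ρ Πₗ⁽ⁱ⁾)}ₗ` the outcome distributions, and `Q⁽ⁱ⁾`
arbitrary probability distributions on the spectra.  Then
`|Tr(Lρ) − ∑ᵢ sᵢ ∑ₗ λₗ⁽ⁱ⁾ qₗ⁽ⁱ⁾| ≤ √t · ‖L‖_HS · maxᵢ ‖P⁽ⁱ⁾ − Q⁽ⁱ⁾‖₁`. -/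
theorem probabilities_to_averages (d t : ℕ)
    (L : Matrix (Fin d) (Fin d) ℂ) (hL : L.IsHermitian)
    (s : Fin t → ℝ) (Li : Fin t → Matrix (Fin d) (Fin d) ℂ)
    (hLi : ∀ i, (Li i).IsHermitian)
    (horth : ∀ i j, ((Li i) * (Li j)ᴴ).trace = if i = j then 1 else 0)
    (hdecomp : L = ∑ i, (s i : ℂ) • Li i)
    (ρ : Matrix (Fin d) (Fin d) ℂ) (hρ : IsDensityMatrix ρ)
    (q : Fin t → Fin d → ℝ) (hq0 : ∀ i l, 0 ≤ q i l) (hq1 : ∀ i, (∑ l, q i l) = 1) :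
    |((L * ρ).trace).re - ∑ i, s i * ∑ l, (hLi i).eigenvalues l * q i l| ≤
      Real.sqrt (t : ℝ) * hsNorm L *
        ⨆ i : Fin t, l1dist (fun l => ((ρ * eigProj (hLi i) l).trace).re) (q i) := by
  set lam : Fin t → Fin d → ℝ := fun i l => (hLi i).eigenvalues l with hlam
  set P : Fin t → Fin d → ℝ := fun i l => ((ρ * eigProj (hLi i) l).trace).re with hP
  set M : ℝ := ⨆ i : Fin t, l1dist (fun l => ((ρ * eigProj (hLi i) l).trace).re) (q i) with hM
  -- trace identity
  have key : ((L * ρ).trace).re = ∑ i, s i * ∑ l, lam i l * P i l := by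
    have h1 : (L * ρ).trace = ∑ i, (s i : ℂ) * ∑ l, (lam i l : ℂ) * (ρ * eigProj (hLi i) l).trace := by
      rw [hdecomp, Finset.sum_mul, Matrix.trace_sum]
      refine Finset.sum_congr rfl fun i _ => ?_
      rw [Matrix.smul_mul, Matrix.trace_smul, smul_eq_mul]
      congr 1
      conv_lhs => rw [spectral_sum (hLi i)]
      rw [Finset.sum_mul, Matrix.trace_sum]
      refine Finset.sum_congr rfl fun l _ => ?_
      rw [Matrix.smul_mul, Matrix.trace_smul, smul_eq_mul, Matrix.trace_mul_comm]
    rw [h1, Complex.re_sum]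
    refine Finset.sum_congr rfl fun i _ => ?_
    rw [Complex.re_ofReal_mul]
    congr 1
    rw [Complex.re_sum]
    exact Finset.sum_congr rfl fun l _ => Complex.re_ofReal_mul _ _
  -- eigenvalue bounds
  have lam_sq : ∀ i, ∑ l, (lam i l)^2 = 1 := by
    intro i
    have h := horth i i
    rw [if_pos rfl, (hLi i).eq, trace_sq (hLi i)] at h
    exact_mod_cast h
  have lam_le : ∀ i l, |lam i l| ≤ 1 := by
    intro i l
    have h2 : (lam i l)^2 ≤ 1 := by
      rw [← lam_sq i]
      exact Finset.single_le_sum (f := fun m => (lam i m)^2) (fun m _ => sq_nonneg _)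
        (Finset.mem_univ l)
    nlinarith [abs_nonneg (lam i l), sq_abs (lam i l)]
  -- HS norm
  have hs : hsNorm L = Real.sqrt (∑ i, (s i)^2) := by
    unfold hsNorm
    congr 1
    have term : ∀ i j : Fin t, (((s i:ℂ) • Li i) * ((s j:ℂ) • Li j)).trace
        = if i = j then ((s i:ℂ))^2 else 0 := by
      intro i j
      rw [Matrix.smul_mul, Matrix.mul_smul, Matrix.trace_smul, Matrix.trace_smul,
        smul_eq_mul, smul_eq_mul]
      conv_lhs => rw [show Li j = (Li j)ᴴ from ((hLi j).eq).symm]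
      rw [horth i j]
      by_cases h : i = j <;> simp [h, sq]
    have h1 : (Lᴴ * L).trace = ∑ i, ((s i : ℂ))^2 := by
      rw [hL.eq]
      conv_lhs => rw [hdecomp]
      rw [Finset.sum_mul, Matrix.trace_sum]
      refine Finset.sum_congr rfl fun i _ => ?_
      rw [Finset.mul_sum, Matrix.trace_sum,
        Finset.sum_congr rfl fun j _ => term i j]
      simp
    rw [h1, Complex.re_sum]
    refine Finset.sum_congr rfl fun i _ => ?_
    rw [← Complex.ofReal_pow, Complex.ofReal_re]
  -- Cauchy–Schwarz
  have cs : ∑ i, |s i| ≤ Real.sqrt t * Real.sqrt (∑ i, (s i)^2) := by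
    rw [← Real.sqrt_mul (Nat.cast_nonneg t)]
    rw [show (∑ i, |s i|) = Real.sqrt ((∑ i, |s i|)^2) from
      (Real.sqrt_sq (Finset.sum_nonneg fun i _ => abs_nonneg _)).symm]
    apply Real.sqrt_le_sqrt
    calc (∑ i, |s i|)^2 ≤ (Finset.univ : Finset (Fin t)).card * ∑ i, |s i|^2 :=
          sq_sum_le_card_mul_sum_sq
      _ = t * ∑ i, (s i)^2 := by simp [sq_abs]
  have hM0 : 0 ≤ M := Real.iSup_nonneg fun i =>
    Finset.sum_nonneg fun l _ => abs_nonneg _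
  have hMi : ∀ i, l1dist (fun l => ((ρ * eigProj (hLi i) l).trace).re) (q i) ≤ M :=
    fun i => le_ciSup (f := fun i : Fin t =>
      l1dist (fun l => ((ρ * eigProj (hLi i) l).trace).re) (q i))
      (Set.Finite.bddAbove (Set.finite_range _)) i
  -- main chain
  rw [key]
  calc |∑ i, s i * ∑ l, lam i l * P i l - ∑ i, s i * ∑ l, lam i l * q i l|
      = |∑ i, s i * ∑ l, lam i l * (P i l - q i l)| := by
        congr 1
        rw [← Finset.sum_sub_distrib]
        refine Finset.sum_congr rfl fun i _ => ?_
        rw [← mul_sub, ← Finset.sum_sub_distrib]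
        congr 1
        exact Finset.sum_congr rfl fun l _ => by ring
    _ ≤ ∑ i, |s i * ∑ l, lam i l * (P i l - q i l)| := Finset.abs_sum_le_sum_abs _ _
    _ ≤ ∑ i, |s i| * M := by
        refine Finset.sum_le_sum fun i _ => ?_
        rw [abs_mul]
        refine mul_le_mul_of_nonneg_left ?_ (abs_nonneg _)
        calc |∑ l, lam i l * (P i l - q i l)| ≤ ∑ l, |lam i l * (P i l - q i l)| :=
              Finset.abs_sum_le_sum_abs _ _
          _ ≤ ∑ l, |P i l - q i l| := by
              refine Finset.sum_le_sum fun l _ => ?_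
              rw [abs_mul]
              exact mul_le_of_le_one_left (abs_nonneg _) (lam_le i l)
          _ ≤ M := hMi i
    _ = (∑ i, |s i|) * M := by rw [Finset.sum_mul]
    _ ≤ (Real.sqrt t * Real.sqrt (∑ i, (s i)^2)) * M :=
        mul_le_mul_of_nonneg_right cs hM0
    _ = Real.sqrt t * hsNorm L * M := by rw [hs]

end QKD
end

section
/- The state ρ_H can be untwisted to a Bell-diagonal state on AB: with ψ_0, ψ_1, ψ_2, ψ_3 the Bell projectors on ℂ²⊗ℂ², |χ_±⟩ = (1/2)(√(2 ± √2)|00⟩ ± √(2 ∓ √2)|11⟩), ρ^{(0)} = (1/2)(|00⟩⟨00| + ψ_2), ρ^{(1)} = (1/2)(|11⟩⟨11| + ψ_3), ρ^{(2)} = |χ_+⟩⟨χ_+|, ρ^{(3)} = |χ_−⟩⟨χ_−|, q_0 = q_1 = p/2, q_2 = q_3 = (1−p)/2, and ρ_H = (1−κ)·∑_{i=0}^3 q_i ψ_{i,AB} ⊗ ρ^{(i)}_{A'B'} + κ·I/16 for parameters p ∈ [0,1], κ ∈ [0,1]: there exists a twisting unitary U_H on (ℂ²)_A ⊗ (ℂ²)_B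 ⊗ (ℂ²)_{A'} ⊗ (ℂ²)_{B'}, i.e. a unitary of the form U_H = ∑_{i,j∈{0,1}} |ij⟩⟨ij|_{AB} ⊗ U_{ij,A'B'}, such that Tr_{A'B'}(U_H† ρ_H U_H) = (1−κ)·(p·ψ_0 + (1−p)·ψ_2) + κ·I/4. -/
open scoped ComplexOrder Matrix

namespace QKD

/-- Kronecker product of two square matrices -/
def kron {I J : Type*} (M : Matrix I I ℂ) (N : Matrix J J ℂ) : Matrix (I × J) (I × J) ℂ :=
  fun x y => M x.1 y.1 * N x.2 y.2

/-- the Bell state `|ψ₀⟩ = (|00⟩ + |11⟩)/√2` -/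
noncomputable def bell0 : Fin 2 × Fin 2 → ℂ := fun p =>
  if p = (0, 0) then ((Real.sqrt 2 : ℂ))⁻¹ else if p = (1, 1) then ((Real.sqrt 2 : ℂ))⁻¹ else 0

/-- the Bell state `|ψ₁⟩ = (|00⟩ − |11⟩)/√2` -/
noncomputable def bell1 : Fin 2 × Fin 2 → ℂ := fun p =>
  if p = (0, 0) then ((Real.sqrt 2 : ℂ))⁻¹ else if p = (1, 1) then -((Real.sqrt 2 : ℂ))⁻¹ else 0

/-- the Bell state `|ψ₂⟩ = (|01⟩ + |10⟩)/√2` -/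
noncomputable def bell2 : Fin 2 × Fin 2 → ℂ := fun p =>
  if p = (0, 1) then ((Real.sqrt 2 : ℂ))⁻¹ else if p = (1, 0) then ((Real.sqrt 2 : ℂ))⁻¹ else 0

/-- the Bell state `|ψ₃⟩ = (|01⟩ − |10⟩)/√2` -/
noncomputable def bell3 : Fin 2 × Fin 2 → ℂ := fun p =>
  if p = (0, 1) then ((Real.sqrt 2 : ℂ))⁻¹ else if p = (1, 0) then -((Real.sqrt 2 : ℂ))⁻¹ else 0

/-- `|χ₊⟩ = (1/2)(√(2+√2)|00⟩ + √(2−√2)|11⟩)` -/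
noncomputable def chiP : Fin 2 × Fin 2 → ℂ := fun p =>
  if p = (0, 0) then ((Real.sqrt (2 + Real.sqrt 2) : ℂ)) / 2
  else if p = (1, 1) then ((Real.sqrt (2 - Real.sqrt 2) : ℂ)) / 2 else 0

/-- `|χ₋⟩ = (1/2)(√(2−√2)|00⟩ − √(2+√2)|11⟩)` -/
noncomputable def chiM : Fin 2 × Fin 2 → ℂ := fun p =>
  if p = (0, 0) then ((Real.sqrt (2 - Real.sqrt 2) : ℂ)) / 2
  else if p = (1, 1) then -((Real.sqrt (2 + Real.sqrt 2) : ℂ)) / 2 else 0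

/-- `|00⟩` -/
def ket00 : Fin 2 × Fin 2 → ℂ := fun p => if p = (0, 0) then 1 else 0

/-- `|11⟩` -/
def ket11 : Fin 2 × Fin 2 → ℂ := fun p => if p = (1, 1) then 1 else 0

/-- `ρ^{(0)} = (1/2)(|00⟩⟨00| + ψ₂)` -/
noncomputable def rho0 : Matrix (Fin 2 × Fin 2) (Fin 2 × Fin 2) ℂ :=
  (1 / 2 : ℂ) • (outer ket00 + outer bell2)

/-- `ρ^{(1)} = (1/2)(|11⟩⟨11| + ψ₃)` -/
noncomputable def rho1 : Matrix (Fin 2 × Fin 2) (Fin 2 × Fin 2) ℂ :=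
  (1 / 2 : ℂ) • (outer ket11 + outer bell3)

/-- `ρ^{(2)} = |χ₊⟩⟨χ₊|` -/
noncomputable def rho2 : Matrix (Fin 2 × Fin 2) (Fin 2 × Fin 2) ℂ := outer chiP

/-- `ρ^{(3)} = |χ₋⟩⟨χ₋|` -/
noncomputable def rho3 : Matrix (Fin 2 × Fin 2) (Fin 2 × Fin 2) ℂ := outer chiM

/-- the Bell-part of the Horodecki state,
`∑ᵢ qᵢ ψ_{i,AB} ⊗ ρ^{(i)}_{A'B'}` with `q₀ = q₁ = p/2`, `q₂ = q₃ = (1−p)/2`;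
the index is `(A × B) × (A' × B')`. -/
noncomputable def rhoBellPart (p : ℝ) :
    Matrix ((Fin 2 × Fin 2) × (Fin 2 × Fin 2)) ((Fin 2 × Fin 2) × (Fin 2 × Fin 2)) ℂ :=
  ((p / 2 : ℝ) : ℂ) • kron (outer bell0) rho0 + ((p / 2 : ℝ) : ℂ) • kron (outer bell1) rho1 +
  (((1 - p) / 2 : ℝ) : ℂ) • kron (outer bell2) rho2 +
  (((1 - p) / 2 : ℝ) : ℂ) • kron (outer bell3) rho3

/-- the full Horodecki state with parameters `p, κ`:
`ρ_H = (1−κ)·∑ᵢ qᵢ ψ_{i,AB} ⊗ ρ^{(i)}_{A'B'} + κ·I/16` -/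
noncomputable def rhoH (p κ : ℝ) :
    Matrix ((Fin 2 × Fin 2) × (Fin 2 × Fin 2)) ((Fin 2 × Fin 2) × (Fin 2 × Fin 2)) ℂ :=
  (((1 - κ) : ℝ) : ℂ) • rhoBellPart p + ((κ : ℝ) : ℂ) • ((1 / 16 : ℂ) • (1 : Matrix _ _ ℂ))

/-- partial trace over the primed systems `A'B'` (the second factor of the index) -/
noncomputable def ptracePrimed
    (M : Matrix ((Fin 2 × Fin 2) × (Fin 2 × Fin 2)) ((Fin 2 × Fin 2) × (Fin 2 × Fin 2)) ℂ) :
    Matrix (Fin 2 × Fin 2) (Fin 2 × Fin 2) ℂ :=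
  fun ab cd => ∑ y : Fin 2 × Fin 2, M (ab, y) (cd, y)


/-- the unitary `V = |00⟩⟨00| − |11⟩⟨11| + |01⟩⟨10| + |10⟩⟨01|` on `A'B'` -/
noncomputable def Vm : Matrix (Fin 2 × Fin 2) (Fin 2 × Fin 2) ℂ := fun x y =>
  if x = (0,0) ∧ y = (0,0) then 1
  else if x = (1,1) ∧ y = (1,1) then -1
  else if x = (0,1) ∧ y = (1,0) then 1
  else if x = (1,0) ∧ y = (0,1) then 1 else 0

/-- the unitary `W = H ⊕ I` (Hadamard on span{00,11}, identity on span{01,10}) -/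
noncomputable def Wm : Matrix (Fin 2 × Fin 2) (Fin 2 × Fin 2) ℂ := fun x y =>
  if x = (0,0) ∧ y = (0,0) then ((Real.sqrt 2 : ℂ))⁻¹
  else if x = (0,0) ∧ y = (1,1) then ((Real.sqrt 2 : ℂ))⁻¹
  else if x = (1,1) ∧ y = (0,0) then ((Real.sqrt 2 : ℂ))⁻¹
  else if x = (1,1) ∧ y = (1,1) then -((Real.sqrt 2 : ℂ))⁻¹
  else if x = (0,1) ∧ y = (0,1) then 1
  else if x = (1,0) ∧ y = (1,0) then 1 else 0

noncomputable def um : Fin 2 × Fin 2 → Matrix (Fin 2 × Fin 2) (Fin 2 × Fin 2) ℂ := fun ij =>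
  if ij = (1,1) then Vm else if ij = (1,0) then Wm else 1

noncomputable def UHm :
    Matrix ((Fin 2 × Fin 2) × (Fin 2 × Fin 2)) ((Fin 2 × Fin 2) × (Fin 2 × Fin 2)) ℂ :=
  fun x y => if x.1 = y.1 then um x.1 x.2 y.2 else 0

theorem hVu : Vm ∈ Matrix.unitaryGroup (Fin 2 × Fin 2) ℂ := by
  constructor <;>
  · ext ⟨a,b⟩ ⟨c,d⟩
    fin_cases a <;> fin_cases b <;> fin_cases c <;> fin_cases d <;>
      simp [Matrix.mul_apply, Fintype.sum_prod_type, Fin.sum_univ_two, Vm, Matrix.one_apply,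
        Matrix.star_apply, Prod.ext_iff]

theorem hWu : Wm ∈ Matrix.unitaryGroup (Fin 2 × Fin 2) ℂ := by
  have h2 : ((Real.sqrt 2 : ℂ))⁻¹ * ((Real.sqrt 2 : ℂ))⁻¹ = 1/2 := by
    rw [← mul_inv]
    norm_cast
    rw [Real.mul_self_sqrt (by norm_num)]
    norm_num
  constructor <;>
  · ext ⟨a,b⟩ ⟨c,d⟩
    fin_cases a <;> fin_cases b <;> fin_cases c <;> fin_cases d <;>
      simp [Matrix.mul_apply, Fintype.sum_prod_type, Fin.sum_univ_two, Wm, Matrix.one_apply,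
        Matrix.star_apply, Prod.ext_iff, h2] <;> ring_nf

lemma key (M : Matrix ((Fin 2 × Fin 2) × (Fin 2 × Fin 2)) ((Fin 2 × Fin 2) × (Fin 2 × Fin 2)) ℂ)
    (ab cd : Fin 2 × Fin 2) :
    ptracePrimed (UHmᴴ * M * UHm) ab cd
      = ∑ s : Fin 2 × Fin 2, ∑ t : Fin 2 × Fin 2,
          M (ab,s) (cd,t) * ((um cd * (um ab)ᴴ) t s) := by
  have h : ∀ y : Fin 2 × Fin 2, (UHmᴴ * M * UHm) (ab,y) (cd,y)
      = ∑ t : Fin 2 × Fin 2, ∑ s : Fin 2 × Fin 2,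
          star (um ab s y) * M (ab,s) (cd,t) * um cd t y := by
    intro y
    have e1 : (UHmᴴ * M * UHm) (ab,y) (cd,y)
        = ∑ ft : (Fin 2 × Fin 2) × (Fin 2 × Fin 2), ∑ es : (Fin 2 × Fin 2) × (Fin 2 × Fin 2),
            star (UHm es (ab,y)) * M es ft * UHm ft (cd,y) := by
      rw [Matrix.mul_apply]
      refine Finset.sum_congr rfl fun ft _ => ?_
      rw [Matrix.mul_apply, Finset.sum_mul]
      refine Finset.sum_congr rfl fun es _ => ?_
      rw [Matrix.conjTranspose_apply]
    rw [e1, Fintype.sum_prod_type]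
    conv_lhs => rw [Finset.sum_comm]
    refine Finset.sum_congr rfl fun t _ => ?_
    have e2 : ∀ f : Fin 2 × Fin 2,
        (∑ es : (Fin 2 × Fin 2) × (Fin 2 × Fin 2),
          star (UHm es (ab,y)) * M es (f,t) * UHm (f,t) (cd,y))
        = ∑ s : Fin 2 × Fin 2, star (um ab s y) * M (ab,s) (f,t) * UHm (f,t) (cd,y) := by
      intro f
      rw [Fintype.sum_prod_type]
      conv_lhs => rw [Finset.sum_comm]
      refine Finset.sum_congr rfl fun s _ => ?_
      simp only [UHm]
      simp [apply_ite (star : ℂ → ℂ), ite_mul, zero_mul, Finset.sum_ite_eq, Finset.sum_ite_eq']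
    simp only [e2]
    conv_lhs => rw [Finset.sum_comm]
    refine Finset.sum_congr rfl fun s _ => ?_
    simp only [UHm]
    simp [mul_ite, mul_zero, Finset.sum_ite_eq, Finset.sum_ite_eq']
  unfold ptracePrimed
  simp only [h]
  have step1 : ∀ t : Fin 2 × Fin 2,
      (∑ s : Fin 2 × Fin 2, M (ab,s) (cd,t) * ((um cd * (um ab)ᴴ) t s))
      = ∑ y : Fin 2 × Fin 2, ∑ s : Fin 2 × Fin 2,
          M (ab,s) (cd,t) * (um cd t y * star (um ab s y)) := by
    intro t
    simp only [Matrix.mul_apply, Matrix.conjTranspose_apply, Finset.mul_sum]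
    rw [Finset.sum_comm]
  conv_rhs => rw [Finset.sum_comm]
  rw [Finset.sum_comm]
  refine Finset.sum_congr rfl fun t _ => ?_
  rw [step1]
  refine Finset.sum_congr rfl fun y _ => ?_
  refine Finset.sum_congr rfl fun s _ => ?_
  ring

set_option maxHeartbeats 4000000 in
/-- **The Horodecki state can be untwisted to a Bell-diagonal state on `AB`**:
for any `p, κ ∈ [0,1]` there is a twisting unitary
`U_H = ∑_{ij} |ij⟩⟨ij|_{AB} ⊗ U_{ij,A'B'}` such that
`Tr_{A'B'}(U_H† ρ_H U_H) = (1−κ)(p ψ₀ + (1−p) ψ₂) + κ I/4`. -/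
theorem horodecki_state_untwisting (p κ : ℝ)
    (hp : p ∈ Set.Icc (0 : ℝ) 1) (hκ : κ ∈ Set.Icc (0 : ℝ) 1) :
    ∃ (u : Fin 2 × Fin 2 → Matrix (Fin 2 × Fin 2) (Fin 2 × Fin 2) ℂ)
      (UH : Matrix ((Fin 2 × Fin 2) × (Fin 2 × Fin 2)) ((Fin 2 × Fin 2) × (Fin 2 × Fin 2)) ℂ),
      (∀ ij, u ij ∈ Matrix.unitaryGroup (Fin 2 × Fin 2) ℂ) ∧
      (∀ x y, UH x y = if x.1 = y.1 then u x.1 x.2 y.2 else 0) ∧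
      ptracePrimed (UHᴴ * rhoH p κ * UH) =
        (((1 - κ) : ℝ) : ℂ) • (((p : ℝ) : ℂ) • outer bell0 + (((1 - p) : ℝ) : ℂ) • outer bell2)
          + ((κ : ℝ) : ℂ) • ((1 / 4 : ℂ) • (1 : Matrix (Fin 2 × Fin 2) (Fin 2 × Fin 2) ℂ)) := by
  have h2 : ((Real.sqrt 2 : ℝ) : ℂ) * ((Real.sqrt 2 : ℝ) : ℂ) = 2 := by
    rw [← Complex.ofReal_mul, Real.mul_self_sqrt (by norm_num)]; norm_num
  have hne : ((Real.sqrt 2 : ℝ) : ℂ) ≠ 0 := by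
    simpa using Real.sqrt_ne_zero'.2 (by norm_num : (0:ℝ) < 2)
  have hsp : ((Real.sqrt (2 + Real.sqrt 2) : ℝ) : ℂ) * ((Real.sqrt (2 + Real.sqrt 2) : ℝ) : ℂ)
      = 2 + ((Real.sqrt 2 : ℝ) : ℂ) := by
    rw [← Complex.ofReal_mul, Real.mul_self_sqrt (by positivity)]; push_cast; ring
  have hsm : ((Real.sqrt (2 - Real.sqrt 2) : ℝ) : ℂ) * ((Real.sqrt (2 - Real.sqrt 2) : ℝ) : ℂ)
      = 2 - ((Real.sqrt 2 : ℝ) : ℂ) := by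
    rw [← Complex.ofReal_mul, Real.mul_self_sqrt
      (by nlinarith [Real.sq_sqrt (by norm_num : (0:ℝ) ≤ 2), Real.sqrt_nonneg 2])]
    push_cast; ring
  have hpm : ((Real.sqrt (2 + Real.sqrt 2) : ℝ) : ℂ) * ((Real.sqrt (2 - Real.sqrt 2) : ℝ) : ℂ)
      = ((Real.sqrt 2 : ℝ) : ℂ) := by
    rw [← Complex.ofReal_mul, ← Real.sqrt_mul (by positivity)]
    congr 2
    rw [show (2 + Real.sqrt 2) * (2 - Real.sqrt 2) = 4 - Real.sqrt 2 * Real.sqrt 2 by ring,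
      Real.mul_self_sqrt (by norm_num)]
    norm_num
  have hq2 : ((Real.sqrt 2 : ℝ) : ℂ) ^ 2 = 2 := by rw [sq, h2]
  have hq4 : ((Real.sqrt 2 : ℝ) : ℂ) ^ 4 = 4 := by
    rw [show ((Real.sqrt 2 : ℝ) : ℂ) ^ 4 = (((Real.sqrt 2 : ℝ) : ℂ) ^ 2) ^ 2 by ring, hq2]
    norm_num
  have hsp2 : ((Real.sqrt (2 + Real.sqrt 2) : ℝ) : ℂ) ^ 2 = 2 + ((Real.sqrt 2 : ℝ) : ℂ) := by
    rw [sq, hsp]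
  have hsm2 : ((Real.sqrt (2 - Real.sqrt 2) : ℝ) : ℂ) ^ 2 = 2 - ((Real.sqrt 2 : ℝ) : ℂ) := by
    rw [sq, hsm]
  have hpm' : ((Real.sqrt (2 - Real.sqrt 2) : ℝ) : ℂ) * ((Real.sqrt (2 + Real.sqrt 2) : ℝ) : ℂ)
      = ((Real.sqrt 2 : ℝ) : ℂ) := by rw [mul_comm]; exact hpm
  have hqe : ∀ n : ℕ, ((Real.sqrt 2 : ℝ) : ℂ) ^ (2 * n) = 2 ^ n := by
    intro n; rw [pow_mul, hq2]
  have hq6 : ((Real.sqrt 2 : ℝ) : ℂ) ^ 6 = 8 := by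
    rw [show ((Real.sqrt 2 : ℝ) : ℂ) ^ 6 = (((Real.sqrt 2 : ℝ) : ℂ) ^ 2) ^ 3 by ring, hq2]
    norm_num
  have hq8 : ((Real.sqrt 2 : ℝ) : ℂ) ^ 8 = 16 := by
    rw [show ((Real.sqrt 2 : ℝ) : ℂ) ^ 8 = (((Real.sqrt 2 : ℝ) : ℂ) ^ 2) ^ 4 by ring, hq2]
    norm_num
  have hq10 : ((Real.sqrt 2 : ℝ) : ℂ) ^ 10 = 32 := by
    rw [show ((Real.sqrt 2 : ℝ) : ℂ) ^ 10 = (((Real.sqrt 2 : ℝ) : ℂ) ^ 2) ^ 5 by ring, hq2]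
    norm_num
  have hq12 : ((Real.sqrt 2 : ℝ) : ℂ) ^ 12 = 64 := by
    rw [show ((Real.sqrt 2 : ℝ) : ℂ) ^ 12 = (((Real.sqrt 2 : ℝ) : ℂ) ^ 2) ^ 6 by ring, hq2]
    norm_num
  have hq14 : ((Real.sqrt 2 : ℝ) : ℂ) ^ 14 = 128 := by
    rw [show ((Real.sqrt 2 : ℝ) : ℂ) ^ 14 = (((Real.sqrt 2 : ℝ) : ℂ) ^ 2) ^ 7 by ring, hq2]
    norm_num
  have hq16 : ((Real.sqrt 2 : ℝ) : ℂ) ^ 16 = 256 := by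
    rw [show ((Real.sqrt 2 : ℝ) : ℂ) ^ 16 = (((Real.sqrt 2 : ℝ) : ℂ) ^ 2) ^ 8 by ring, hq2]
    norm_num
  have h3 : (((Real.sqrt 2 : ℝ) : ℂ) ^ 3)⁻¹ = ((Real.sqrt 2 : ℝ) : ℂ) * 4⁻¹ := by
    rw [show ((Real.sqrt 2 : ℝ) : ℂ) ^ 3
        = ((Real.sqrt 2 : ℝ) : ℂ) ^ 2 * ((Real.sqrt 2 : ℝ) : ℂ) by ring, hq2]
    field_simp
    linear_combination -2 * hq2
  refine ⟨um, UHm, ?_, fun x y => rfl, ?_⟩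
  · intro ij
    fin_cases ij <;> simp [um, Prod.ext_iff]
    · exact hWu
    · exact hVu
  · ext ⟨a,b⟩ ⟨c,d⟩
    rw [key]
    fin_cases a <;> fin_cases b <;> fin_cases c <;> fin_cases d <;>
      (try simp [rhoH, rhoBellPart, kron, outer, rho0, rho1, rho2, rho3, bell0, bell1, bell2,
          bell3, chiP, chiM, ket00, ket11, um, Vm, Wm, Fintype.sum_prod_type, Fin.sum_univ_two,
          Matrix.mul_apply, Matrix.conjTranspose_apply, Matrix.one_apply, Matrix.add_apply,
          Matrix.smul_apply, smul_eq_mul, Prod.ext_iff]) <;>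
      (try field_simp) <;> (try ring_nf)
    all_goals try simp [map_ofNat, hq2, hq4, hq10, hq12, hq14, hq16, hsp2, hsm2, hpm, hpm', inv_pow]
    all_goals try ring_nf
    all_goals try norm_num
    all_goals try rw [h3]
    all_goals try (linear_combination (((κ:ℂ) * (p:ℂ) - (κ:ℂ) - (p:ℂ)) * ((Real.sqrt 2 : ℝ) : ℂ) * 4⁻¹) * hpm + ((1 + (κ:ℂ) * (p:ℂ) - (κ:ℂ) - (p:ℂ)) * 2⁻¹) * hq2)
    all_goals linear_combination (4 * ((κ:ℂ) * (p:ℂ) - (κ:ℂ) - (p:ℂ))) * hpm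


end QKD
end
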